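/- Upcasts shrink terms under erasure: in λ_{[]⟨⟩}^{≤full} with the explicit upcast reduction rules, if M ▷ A reduces in one step (under compatible closure of the upcast rules) to N, then ⌊M⌋ ⊑ ⌊N⌋, where ⌊-⌋ is type erasure and ⊑ is the record-width preorder on untyped terms. -/

import Mathlib

namespace Stmt13

abbrev Label := ℕ

/-- Types of λ_{[]⟨⟩}^{≤full}. -/
inductive Ty : Type where
  | tvar : ℕ → Ty
  | arrow : Ty → Ty → Ty
  | variant : List (Label × Ty) → Ty
  | record : List (Label × Ty) → Ty

/-- Full structural subtyping: covariant in variants, records and codomains,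
contravariant in function domains. -/
inductive Sub : Ty → Ty → Prop where
  | tvar (n : ℕ) : Sub (.tvar n) (.tvar n)
  | arrow {A A' B B'} : Sub A' A → Sub B B' → Sub (.arrow A B) (.arrow A' B')
  | variant {R R'} :
      (∀ ℓ A, List.lookup ℓ R = some A → ∃ A', List.lookup ℓ R' = some A') →
      (∀ ℓ A A', List.lookup ℓ R = some A → List.lookup ℓ R' = some A' → Sub A A') →
      Sub (.variant R) (.variant R')
  | record {R R'} :
      (∀ ℓ A', List.lookup ℓ R' = some A' → ∃ A, List.lookup ℓ R = some A) →
      (∀ ℓ A A', List.lookup ℓ R = some A → List.lookup ℓ R' = some A' → Sub A A') →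
      Sub (.record R) (.record R')

/-- Typed terms; `upcast M A` is the explicit upcast M ▷ A. -/
inductive Tm : Type where
  | var : ℕ → Tm
  | lam : Ty → Tm → Tm
  | app : Tm → Tm → Tm
  | inj : Label → Tm → Ty → Tm
  | case : Tm → List (Label × Tm) → Tm
  | record : List (Label × Tm) → Tm
  | proj : Tm → Label → Tm
  | upcast : Tm → Ty → Tm

mutual
def shiftTm (c : ℕ) : Tm → Tm
  | .var n => if n < c then .var n else .var (n + 1)
  | .lam A M => .lam A (shiftTm (c + 1) M)
  | .app M N => .app (shiftTm c M) (shiftTm c N)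
  | .inj ℓ M A => .inj ℓ (shiftTm c M) A
  | .case M Bs => .case (shiftTm c M) (shiftLs (c + 1) Bs)
  | .record es => .record (shiftLs c es)
  | .proj M ℓ => .proj (shiftTm c M) ℓ
  | .upcast M A => .upcast (shiftTm c M) A
def shiftLs (c : ℕ) : List (Label × Tm) → List (Label × Tm)
  | [] => []
  | (ℓ, M) :: es => (ℓ, shiftTm c M) :: shiftLs c es
end

mutual
/-- Capture-avoiding substitution of N for de Bruijn index k. -/
def substTm (k : ℕ) (N : Tm) : Tm → Tm
  | .var n => if n = k then N else if n < k then .var n else .var (n - 1)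
  | .lam A M => .lam A (substTm (k + 1) (shiftTm 0 N) M)
  | .app M₁ M₂ => .app (substTm k N M₁) (substTm k N M₂)
  | .inj ℓ M A => .inj ℓ (substTm k N M) A
  | .case M Bs => .case (substTm k N M) (substLs (k + 1) (shiftTm 0 N) Bs)
  | .record es => .record (substLs k N es)
  | .proj M ℓ => .proj (substTm k N M) ℓ
  | .upcast M A => .upcast (substTm k N M) A
def substLs (k : ℕ) (N : Tm) : List (Label × Tm) → List (Label × Tm)
  | [] => []
  | (ℓ, M) :: es => (ℓ, substTm k N M) :: substLs k N es
end

mutual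
/-- Replace each occurrence of variable k by (var k ▷ A), keeping binders. -/
def replaceUp (A : Ty) (k : ℕ) : Tm → Tm
  | .var n => if n = k then .upcast (.var n) A else .var n
  | .lam B M => .lam B (replaceUp A (k + 1) M)
  | .app M N => .app (replaceUp A k M) (replaceUp A k N)
  | .inj ℓ M B => .inj ℓ (replaceUp A k M) B
  | .case M Bs => .case (replaceUp A k M) (replaceUpLs A (k + 1) Bs)
  | .record es => .record (replaceUpLs A k es)
  | .proj M ℓ => .proj (replaceUp A k M) ℓ
  | .upcast M B => .upcast (replaceUp A k M) B
def replaceUpLs (A : Ty) (k : ℕ) : List (Label × Tm) → List (Label × Tm)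
  | [] => []
  | (ℓ, M) :: es => (ℓ, replaceUp A k M) :: replaceUpLs A k es
end

/-- Typing of λ_{[]⟨⟩}^{≤full}. -/
inductive HasTy : List Ty → Tm → Ty → Prop where
  | var {Γ n A} : Γ[n]? = some A → HasTy Γ (.var n) A
  | lam {Γ A B M} : HasTy (A :: Γ) M B → HasTy Γ (.lam A M) (.arrow A B)
  | app {Γ A B M N} : HasTy Γ M (.arrow A B) → HasTy Γ N A → HasTy Γ (.app M N) B
  | inj {Γ ℓ R A M} : List.lookup ℓ R = some A → HasTy Γ M A →
      HasTy Γ (.inj ℓ M (.variant R)) (.variant R)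
  | case {Γ R M Bs C} : HasTy Γ M (.variant R) →
      (∀ ℓ A, List.lookup ℓ R = some A → (List.lookup ℓ Bs).isSome) →
      (∀ ℓ A N, List.lookup ℓ R = some A → List.lookup ℓ Bs = some N →
        HasTy (A :: Γ) N C) →
      HasTy Γ (.case M Bs) C
  | record {Γ} {es : List (Label × Tm)} {R : List (Label × Ty)} :
      es.map Prod.fst = R.map Prod.fst →
      (∀ (i : ℕ) p q, es[i]? = some p → R[i]? = some q →
        HasTy Γ (Prod.snd p) (Prod.snd q)) →
      HasTy Γ (.record es) (.record R)
  | proj {Γ R M ℓ A} : HasTy Γ M (.record R) → List.lookup ℓ R = some A →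
      HasTy Γ (.proj M ℓ) A
  | upcast {Γ M A B} : HasTy Γ M A → Sub A B → HasTy Γ (.upcast M B) B

/-! ### Untyped terms, erasure, and the record-width preorder ⊑. -/

/-- Untyped λ_{[]⟨⟩} terms. -/
inductive UTm : Type where
  | var : ℕ → UTm
  | lam : UTm → UTm
  | app : UTm → UTm → UTm
  | inj : Label → UTm → UTm
  | case : UTm → List (Label × UTm) → UTm
  | record : List (Label × UTm) → UTm
  | proj : UTm → Label → UTm

mutual
def shiftU (c : ℕ) : UTm → UTm
  | .var n => if n < c then .var n else .var (n + 1)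
  | .lam M => .lam (shiftU (c + 1) M)
  | .app M N => .app (shiftU c M) (shiftU c N)
  | .inj ℓ M => .inj ℓ (shiftU c M)
  | .case M Bs => .case (shiftU c M) (shiftULs (c + 1) Bs)
  | .record es => .record (shiftULs c es)
  | .proj M ℓ => .proj (shiftU c M) ℓ
def shiftULs (c : ℕ) : List (Label × UTm) → List (Label × UTm)
  | [] => []
  | (ℓ, M) :: es => (ℓ, shiftU c M) :: shiftULs c es
end

mutual
/-- Capture-avoiding substitution on untyped terms. -/
def substU (k : ℕ) (N : UTm) : UTm → UTm
  | .var n => if n = k then N else if n < k then .var n else .var (n - 1)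
  | .lam M => .lam (substU (k + 1) (shiftU 0 N) M)
  | .app M₁ M₂ => .app (substU k N M₁) (substU k N M₂)
  | .inj ℓ M => .inj ℓ (substU k N M)
  | .case M Bs => .case (substU k N M) (substULs (k + 1) (shiftU 0 N) Bs)
  | .record es => .record (substULs k N es)
  | .proj M ℓ => .proj (substU k N M) ℓ
def substULs (k : ℕ) (N : UTm) : List (Label × UTm) → List (Label × UTm)
  | [] => []
  | (ℓ, M) :: es => (ℓ, substU k N M) :: substULs k N es
end

mutual
/-- Type erasure: drop upcasts and all type annotations. -/
def erase : Tm → UTm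
  | .var n => .var n
  | .lam _ M => .lam (erase M)
  | .app M N => .app (erase M) (erase N)
  | .inj ℓ M _ => .inj ℓ (erase M)
  | .case M Bs => .case (erase M) (eraseLs Bs)
  | .record es => .record (eraseLs es)
  | .proj M ℓ => .proj (erase M) ℓ
  | .upcast M _ => erase M
def eraseLs : List (Label × Tm) → List (Label × UTm)
  | [] => []
  | (ℓ, M) :: es => (ℓ, erase M) :: eraseLs es
end

/-- The preorder ⊑ on untyped terms: a record on the left may have extra
fields; congruent on all other constructs. -/
inductive Sqsub : UTm → UTm → Prop where
  | var (n : ℕ) : Sqsub (.var n) (.var n)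
  | lam {M M'} : Sqsub M M' → Sqsub (.lam M) (.lam M')
  | app {M M' N N'} : Sqsub M M' → Sqsub N N' → Sqsub (.app M N) (.app M' N')
  | inj {ℓ M M'} : Sqsub M M' → Sqsub (.inj ℓ M) (.inj ℓ M')
  | case {M M' Bs Bs'} : Sqsub M M' →
      Bs.map Prod.fst = Bs'.map Prod.fst →
      (∀ (i : ℕ) p q, Bs[i]? = some p → Bs'[i]? = some q →
        Sqsub (Prod.snd p) (Prod.snd q)) →
      Sqsub (.case M Bs) (.case M' Bs')
  | proj {M M' ℓ} : Sqsub M M' → Sqsub (.proj M ℓ) (.proj M' ℓ)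
  | record {es es'} :
      (∀ ℓ N, List.lookup ℓ es' = some N → (List.lookup ℓ es).isSome) →
      (∀ ℓ M N, List.lookup ℓ es = some M → List.lookup ℓ es' = some N →
        Sqsub M N) →
      Sqsub (.record es) (.record es')

/-! ### Reduction. -/

/-- β base rules on typed terms. -/
inductive Beta : Tm → Tm → Prop where
  | lam {A M N} : Beta (.app (.lam A M) N) (substTm 0 N M)
  | case {ℓ M A Bs N} : List.lookup ℓ Bs = some N →
      Beta (.case (.inj ℓ M A) Bs) (substTm 0 M N)
  | proj {es ℓ M} : List.lookup ℓ es = some M → Beta (.proj (.record es) ℓ) M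

/-- Upcast base rules: upcasts are pushed through values. -/
inductive Up : Tm → Tm → Prop where
  | tvar {M n} : Up (.upcast M (.tvar n)) M
  | lam {A M A' B'} :
      Up (.upcast (.lam A M) (.arrow A' B'))
         (.lam A' (.upcast (replaceUp A 0 M) B'))
  | inj {ℓ M A R Aℓ} : List.lookup ℓ R = some Aℓ →
      Up (.upcast (.inj ℓ M A) (.variant R))
         (.inj ℓ (.upcast M Aℓ) (.variant R))
  | record {es : List (Label × Tm)} {R : List (Label × Ty)} {Ns : List (Label × Tm)} :
      Ns.map Prod.fst = R.map Prod.fst →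
      (∀ (i : ℕ) q r, R[i]? = some q → Ns[i]? = some r →
        ∃ M, List.lookup (Prod.fst q) es = some M ∧
          Prod.snd r = Tm.upcast M (Prod.snd q)) →
      Up (.upcast (.record es) (.record R)) (.record Ns)

/-- Compatible closure of a base reduction relation on typed terms. -/
inductive Compat (r : Tm → Tm → Prop) : Tm → Tm → Prop where
  | base {M N} : r M N → Compat r M N
  | lam {A M M'} : Compat r M M' → Compat r (.lam A M) (.lam A M')
  | appL {M M' N} : Compat r M M' → Compat r (.app M N) (.app M' N)
  | appR {M N N'} : Compat r N N' → Compat r (.app M N) (.app M N')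
  | inj {ℓ M M' A} : Compat r M M' → Compat r (.inj ℓ M A) (.inj ℓ M' A)
  | caseScrut {M M' Bs} : Compat r M M' → Compat r (.case M Bs) (.case M' Bs)
  | caseBranch {M Bs₁ Bs₂ ℓ N N'} : Compat r N N' →
      Compat r (.case M (Bs₁ ++ (ℓ, N) :: Bs₂)) (.case M (Bs₁ ++ (ℓ, N') :: Bs₂))
  | recordField {es₁ es₂ ℓ M M'} : Compat r M M' →
      Compat r (.record (es₁ ++ (ℓ, M) :: es₂)) (.record (es₁ ++ (ℓ, M') :: es₂))
  | proj {M M' ℓ} : Compat r M M' → Compat r (.proj M ℓ) (.proj M' ℓ)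
  | upcast {M M' A} : Compat r M M' → Compat r (.upcast M A) (.upcast M' A)

/-- β base rules on untyped terms. -/
inductive UBeta : UTm → UTm → Prop where
  | lam {M N} : UBeta (.app (.lam M) N) (substU 0 N M)
  | case {ℓ M Bs N} : List.lookup ℓ Bs = some N →
      UBeta (.case (.inj ℓ M) Bs) (substU 0 M N)
  | proj {es ℓ M} : List.lookup ℓ es = some M → UBeta (.proj (.record es) ℓ) M

/-- Compatible closure on untyped terms. -/
inductive UCompat (r : UTm → UTm → Prop) : UTm → UTm → Prop where
  | base {M N} : r M N → UCompat r M N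
  | lam {M M'} : UCompat r M M' → UCompat r (.lam M) (.lam M')
  | appL {M M' N} : UCompat r M M' → UCompat r (.app M N) (.app M' N)
  | appR {M N N'} : UCompat r N N' → UCompat r (.app M N) (.app M N')
  | inj {ℓ M M'} : UCompat r M M' → UCompat r (.inj ℓ M) (.inj ℓ M')
  | caseScrut {M M' Bs} : UCompat r M M' → UCompat r (.case M Bs) (.case M' Bs)
  | caseBranch {M Bs₁ Bs₂ ℓ N N'} : UCompat r N N' →
      UCompat r (.case M (Bs₁ ++ (ℓ, N) :: Bs₂)) (.case M (Bs₁ ++ (ℓ, N') :: Bs₂))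
  | recordField {es₁ es₂ ℓ M M'} : UCompat r M M' →
      UCompat r (.record (es₁ ++ (ℓ, M) :: es₂)) (.record (es₁ ++ (ℓ, M') :: es₂))
  | proj {M M' ℓ} : UCompat r M M' → UCompat r (.proj M ℓ) (.proj M' ℓ)

end Stmt13

/-! Erasure forgets upcasts and annotations, so the rules for type variables, injections and
abstractions (whose body only gains upcasts around the bound variable) leave the erasure
unchanged. The record rule keeps exactly the fields named by the target type, each erasing to
the source field of the same label, so its erasure is a width restriction of the source record.
Since ⊑ is reflexive and a congruence, this propagates through the compatible closure. -/

namespace List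

theorem lookup_map_snd {α β γ : Type} [BEq α] (f : β → γ) (a : α) :
    ∀ l : List (α × β), (l.map fun p => (p.1, f p.2)).lookup a = (l.lookup a).map f
  | [] => rfl
  | (k, _) :: l => by
    simp only [map_cons, lookup_cons]
    cases a == k
    · exact lookup_map_snd f a l
    · rfl

theorem exists_getElem?_eq_of_lookup_eq_some {α β : Type} [BEq α] [LawfulBEq α]
    {l : List (α × β)} {a : α} {b : β} (h : l.lookup a = some b) :
    ∃ i : ℕ, l[i]? = some (a, b) := by
  obtain ⟨l₁, l₂, rfl, -⟩ := lookup_eq_some_iff.mp h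
  exact ⟨l₁.length, by simp⟩

theorem Forall₂.rel_of_getElem? {α β : Type} {R : α → β → Prop} :
    ∀ {l : List α} {l' : List β}, Forall₂ R l l' →
      ∀ {i : ℕ} {a b}, l[i]? = some a → l'[i]? = some b → R a b
  | _, _, .nil, _, _, _, ha, _ => by simp at ha
  | _, _, .cons hab _, 0, _, _, ha, hb => by
    simp only [getElem?_cons_zero, Option.some.injEq] at ha hb
    exact ha ▸ hb ▸ hab
  | _, _, .cons _ h, _ + 1, _, _, ha, hb => h.rel_of_getElem? ha hb

theorem Forall₂.map_fst_eq {α β γ : Type} {r : β → γ → Prop} :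
    ∀ {l : List (α × β)} {l' : List (α × γ)},
      Forall₂ (fun p q => p.1 = q.1 ∧ r p.2 q.2) l l' → l.map Prod.fst = l'.map Prod.fst
  | _, _, .nil => rfl
  | _, _, .cons hpq h => by rw [map_cons, map_cons, hpq.1, h.map_fst_eq]

theorem Forall₂.lookup_rel {α β γ : Type} [BEq α] {r : β → γ → Prop} (a : α) :
    ∀ {l : List (α × β)} {l' : List (α × γ)},
      Forall₂ (fun p q => p.1 = q.1 ∧ r p.2 q.2) l l' → Option.Rel r (l.lookup a) (l'.lookup a)
  | _, _, .nil => .none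
  | (k, _) :: _, (_, _) :: _, .cons ⟨rfl, hbc⟩ h => by
    simp only [lookup_cons]
    cases a == k
    · exact h.lookup_rel a
    · exact .some hbc

end List

namespace Stmt13

abbrev FieldSqsub (p q : Label × UTm) : Prop := p.1 = q.1 ∧ Sqsub p.2 q.2

namespace Sqsub

theorem record_of_lookup {es es' : List (Label × UTm)}
    (h : ∀ ℓ N, es'.lookup ℓ = some N → ∃ M, es.lookup ℓ = some M ∧ Sqsub M N) :
    Sqsub (.record es) (.record es') :=
  .record (fun ℓ N hN => by obtain ⟨M, hM, -⟩ := h ℓ N hN; simp [hM])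
    (fun ℓ M N hM hN => by obtain ⟨M', hM', hMN⟩ := h ℓ N hN; cases hM.symm.trans hM'; exact hMN)

theorem record_of_forall₂ {es es' : List (Label × UTm)}
    (h : List.Forall₂ FieldSqsub es es') : Sqsub (.record es) (.record es') :=
  record_of_lookup fun ℓ N hN => by
    have hrel := h.lookup_rel ℓ
    rw [hN] at hrel
    generalize es.lookup ℓ = o at hrel ⊢
    cases hrel with
    | some hMN => exact ⟨_, rfl, hMN⟩

theorem case_of_forall₂ {M M' : UTm} {Bs Bs' : List (Label × UTm)} (hM : Sqsub M M')
    (hBs : List.Forall₂ FieldSqsub Bs Bs') : Sqsub (.case M Bs) (.case M' Bs') :=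
  .case hM hBs.map_fst_eq fun _ _ _ hp hq => (hBs.rel_of_getElem? hp hq).2

mutual
protected theorem refl : ∀ M : UTm, Sqsub M M
  | .var n => .var n
  | .lam M => .lam (Sqsub.refl M)
  | .app M N => .app (Sqsub.refl M) (Sqsub.refl N)
  | .inj _ M => .inj (Sqsub.refl M)
  | .proj M _ => .proj (Sqsub.refl M)
  | .case M Bs => case_of_forall₂ (Sqsub.refl M) (refl_fields Bs)
  | .record es => record_of_forall₂ (refl_fields es)

theorem refl_fields : ∀ es : List (Label × UTm), List.Forall₂ FieldSqsub es es
  | [] => .nil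
  | (_, M) :: es => .cons ⟨rfl, Sqsub.refl M⟩ (refl_fields es)
end

theorem fields_update {es₁ es₂ : List (Label × UTm)} {ℓ : Label} {M M' : UTm}
    (h : Sqsub M M') :
    List.Forall₂ FieldSqsub (es₁ ++ (ℓ, M) :: es₂) (es₁ ++ (ℓ, M') :: es₂) :=
  List.rel_append (refl_fields es₁) (.cons ⟨rfl, h⟩ (refl_fields es₂))

end Sqsub

theorem eraseLs_eq_map : ∀ es : List (Label × Tm), eraseLs es = es.map fun p => (p.1, erase p.2)
  | [] => rfl
  | (_, _) :: es => by rw [eraseLs, eraseLs_eq_map es, List.map_cons]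

theorem lookup_eraseLs (es : List (Label × Tm)) (ℓ : Label) :
    (eraseLs es).lookup ℓ = (es.lookup ℓ).map erase := by
  rw [eraseLs_eq_map, List.lookup_map_snd]

theorem eraseLs_append (es₁ es₂ : List (Label × Tm)) :
    eraseLs (es₁ ++ es₂) = eraseLs es₁ ++ eraseLs es₂ := by
  simp only [eraseLs_eq_map, List.map_append]

mutual
theorem erase_replaceUp (A : Ty) : ∀ (k : ℕ) (M : Tm), erase (replaceUp A k M) = erase M
  | k, .var n => by by_cases h : n = k <;> simp [replaceUp, h, erase]
  | k, .lam _ M => by simp [replaceUp, erase, erase_replaceUp A (k + 1) M]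
  | k, .app M N => by simp [replaceUp, erase, erase_replaceUp A k M, erase_replaceUp A k N]
  | k, .inj _ M _ => by simp [replaceUp, erase, erase_replaceUp A k M]
  | k, .case M Bs => by
    simp [replaceUp, erase, erase_replaceUp A k M, erase_replaceUpLs A (k + 1) Bs]
  | k, .record es => by simp [replaceUp, erase, erase_replaceUpLs A k es]
  | k, .proj M _ => by simp [replaceUp, erase, erase_replaceUp A k M]
  | k, .upcast M _ => by simp [replaceUp, erase, erase_replaceUp A k M]

theorem erase_replaceUpLs (A : Ty) :
    ∀ (k : ℕ) (es : List (Label × Tm)), eraseLs (replaceUpLs A k es) = eraseLs es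
  | _, [] => rfl
  | k, (_, M) :: es => by
    simp [replaceUpLs, eraseLs, erase_replaceUp A k M, erase_replaceUpLs A k es]
end

theorem exists_lookup_of_up_record {es : List (Label × Tm)} {R : List (Label × Ty)}
    {Ns : List (Label × Tm)} (hkeys : Ns.map Prod.fst = R.map Prod.fst)
    (hfields : ∀ (i : ℕ) q r, R[i]? = some q → Ns[i]? = some r →
      ∃ M, es.lookup q.1 = some M ∧ r.2 = .upcast M q.2)
    {ℓ : Label} {P : Tm} (hP : Ns.lookup ℓ = some P) :
    ∃ M, es.lookup ℓ = some M ∧ erase P = erase M := by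
  obtain ⟨i, hi⟩ := List.exists_getElem?_eq_of_lookup_eq_some hP
  have hRi : (R[i]?).map Prod.fst = some ℓ := by
    rw [← List.getElem?_map, ← hkeys, List.getElem?_map, hi]; rfl
  obtain ⟨q, hq, rfl⟩ := Option.map_eq_some_iff.mp hRi
  obtain ⟨M, hM, hPM⟩ := hfields i q (q.1, P) hq hi
  exact ⟨M, hM, by rw [show P = _ from hPM]; rfl⟩

theorem Up.sqsub_erase {M N : Tm} (h : Up M N) : Sqsub (erase M) (erase N) := by
  cases h with
  | tvar => exact .refl _
  | lam =>
    simp only [erase, erase_replaceUp]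
    exact .refl _
  | inj => exact .refl _
  | record hkeys hfields =>
    refine .record_of_lookup fun ℓ N hN => ?_
    rw [lookup_eraseLs] at hN
    obtain ⟨P, hP, rfl⟩ := Option.map_eq_some_iff.mp hN
    obtain ⟨M, hM, hPM⟩ := exists_lookup_of_up_record hkeys hfields hP
    exact ⟨erase M, by rw [lookup_eraseLs, hM]; rfl, hPM ▸ .refl _⟩

theorem Compat.sqsub_erase {r : Tm → Tm → Prop}
    (hr : ∀ M N, r M N → Sqsub (erase M) (erase N)) {M N : Tm} (h : Compat r M N) :
    Sqsub (erase M) (erase N) := by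
  induction h with
  | base h => exact hr _ _ h
  | lam _ ih => exact .lam ih
  | appL _ ih => exact .app ih (.refl _)
  | appR _ ih => exact .app (.refl _) ih
  | inj _ ih => exact .inj ih
  | caseScrut _ ih => exact .case_of_forall₂ ih (Sqsub.refl_fields _)
  | caseBranch _ ih =>
    simp only [erase, eraseLs_append, eraseLs]
    exact .case_of_forall₂ (.refl _) (Sqsub.fields_update ih)
  | recordField _ ih =>
    simp only [erase, eraseLs_append, eraseLs]
    exact .record_of_forall₂ (Sqsub.fields_update ih)
  | proj _ ih => exact .proj ih
  | upcast _ ih => exact ih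

theorem upcasts_shrink_terms {M N : Tm} {A : Ty}
    (h : Compat Up (.upcast M A) N) : Sqsub (erase M) (erase N) :=
  show Sqsub (erase (.upcast M A)) (erase N) from
    Compat.sqsub_erase (fun _ _ => Up.sqsub_erase) h

end Stmt13
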